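/- Let H be a complex Hilbert space and let ψ, φ ∈ H be unit vectors such that r := ⟨ψ, φ⟩ is real with 0 < r < 1. Set E = ½|ψ⟩⟨ψ| and F = ½|φ⟩⟨φ|. Then E + F ≤ 1, but the Jordan product E ∘ F = (r/8)(|ψ⟩⟨φ| + |φ⟩⟨ψ|) is not a positive operator. -/

import Mathlib

set_option synthInstance.maxHeartbeats 1000000
set_option maxHeartbeats 1000000

variable {H : Type*} [NormedAddCommGroup H] [InnerProductSpace ℂ H] [CompleteSpace H]

/-- The Jordan product E ∘ F = ½(EF + FE). -/
noncomputable def jordan (E F : H →L[ℂ] H) : H →L[ℂ] H := (2 : ℂ)⁻¹ • (E * F + F * E)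

/-- The rank-one operator |u⟩⟨v| : x ↦ ⟨v, x⟩ u. -/
noncomputable def rankOne (u v : H) : H →L[ℂ] H := (innerSL ℂ v).smulRight u

/-!
E and F are halves of the orthogonal projections onto ψ and φ, so E + F ≤ ½ + ½ = 1.
Since |ψ⟩⟨ψ| |φ⟩⟨φ| = r |ψ⟩⟨φ|, the Jordan product is (r/8)(|ψ⟩⟨φ| + |φ⟩⟨ψ|), and its quadratic
form at ψ - φ is -(r/4)(1 - r)² < 0.
-/

open scoped InnerProductSpace ComplexOrder

section

variable {V : Type*} [NormedAddCommGroup V] [InnerProductSpace ℂ V]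

lemma rankOne_eq_innerProductSpace_rankOne (u v : V) :
    rankOne u v = InnerProductSpace.rankOne ℂ u v := rfl

lemma rankOne_mul_rankOne (u v w z : V) : rankOne u v * rankOne w z = ⟪v, w⟫_ℂ • rankOne u z :=
  InnerProductSpace.rankOne_comp_rankOne u v w z

lemma jordan_smul_smul (a b : ℂ) (E F : V →L[ℂ] V) :
    jordan (a • E) (b • F) = (a * b) • jordan E F := by
  simp only [jordan, smul_mul_smul_comm, mul_comm b a, smul_add, smul_comm (a * b)]

lemma jordan_rankOne_self (u v : V) :
    jordan (rankOne u u) (rankOne v v) =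
      (2 : ℂ)⁻¹ • (⟪u, v⟫_ℂ • rankOne u v + ⟪v, u⟫_ℂ • rankOne v u) := by
  rw [jordan, rankOne_mul_rankOne, rankOne_mul_rankOne]

lemma half_smul_add_half_smul_le_one {P Q : V →L[ℂ] V} (hP : P ≤ 1) (hQ : Q ≤ 1) :
    (2 : ℂ)⁻¹ • P + (2 : ℂ)⁻¹ • Q ≤ 1 := by
  have hhalf : (0 : ℂ) ≤ 2⁻¹ := by norm_num [Complex.le_def]
  rw [ContinuousLinearMap.le_def] at *
  have h : (1 : V →L[ℂ] V) - ((2 : ℂ)⁻¹ • P + (2 : ℂ)⁻¹ • Q) =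
      (2 : ℂ)⁻¹ • (1 - P) + (2 : ℂ)⁻¹ • (1 - Q) := by module
  rw [h]
  exact (hP.smul_of_nonneg hhalf).add (hQ.smul_of_nonneg hhalf)

lemma inner_rankOne_add_rankOne_sub {u v : V} (hu : ‖u‖ = 1) (hv : ‖v‖ = 1) {r : ℝ}
    (huv : ⟪u, v⟫_ℂ = r) :
    ⟪(rankOne u v + rankOne v u) (u - v), u - v⟫_ℂ = ((-2 * (1 - r) ^ 2 : ℝ) : ℂ) := by
  have hvu : ⟪v, u⟫_ℂ = r := by rw [← inner_conj_symm, huv, Complex.conj_ofReal]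
  have huu : ⟪u, u⟫_ℂ = 1 := by simp [hu]
  have hvv : ⟪v, v⟫_ℂ = 1 := by simp [hv]
  simp only [rankOne_eq_innerProductSpace_rankOne, add_apply,
    InnerProductSpace.rankOne_apply, inner_add_left, inner_smul_left, inner_sub_left,
    inner_sub_right, huv, hvu, huu, hvv, map_sub, map_one, Complex.conj_ofReal]
  push_cast
  ring

lemma not_isPositive_rankOne_add_rankOne {u v : V} (hu : ‖u‖ = 1) (hv : ‖v‖ = 1) {r : ℝ}
    (huv : ⟪u, v⟫_ℂ = r) (hr : r < 1) : ¬ (rankOne u v + rankOne v u).IsPositive := by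
  intro hpos
  have h := hpos.inner_nonneg_left (u - v)
  rw [inner_rankOne_add_rankOne_sub hu hv huv, Complex.zero_le_real] at h
  nlinarith [pow_pos (sub_pos.2 hr) 2]

end

lemma rankOne_self_le_one {u : H} (hu : ‖u‖ = 1) : rankOne u u ≤ 1 :=
  (InnerProductSpace.isStarProjection_rankOne_self hu).le_one

/-- For unit vectors ψ, φ with real inner product r, 0 < r < 1, the effects E = ½|ψ⟩⟨ψ| and
F = ½|φ⟩⟨φ| satisfy E + F ≤ 1, but their Jordan product E ∘ F = (r/8)(|ψ⟩⟨φ| + |φ⟩⟨ψ|)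
is not a positive operator. -/
theorem jordan_not_nonneg_example (ψ φ : H) (hψ : ‖ψ‖ = 1) (hφ : ‖φ‖ = 1)
    (r : ℝ) (hr : inner ℂ ψ φ = (r : ℂ)) (hr₀ : 0 < r) (hr₁ : r < 1) :
    (2 : ℂ)⁻¹ • rankOne ψ ψ + (2 : ℂ)⁻¹ • rankOne φ φ ≤ 1 ∧
    jordan ((2 : ℂ)⁻¹ • rankOne ψ ψ) ((2 : ℂ)⁻¹ • rankOne φ φ) =
      ((r : ℂ) / 8) • (rankOne ψ φ + rankOne φ ψ) ∧
    ¬ (0 ≤ jordan ((2 : ℂ)⁻¹ • rankOne ψ ψ) ((2 : ℂ)⁻¹ • rankOne φ φ)) := by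
  have hr' : ⟪φ, ψ⟫_ℂ = r := by rw [← inner_conj_symm, hr, Complex.conj_ofReal]
  have hjordan : jordan ((2 : ℂ)⁻¹ • rankOne ψ ψ) ((2 : ℂ)⁻¹ • rankOne φ φ) =
      ((r : ℂ) / 8) • (rankOne ψ φ + rankOne φ ψ) := by
    rw [jordan_smul_smul, jordan_rankOne_self, hr, hr']
    module
  refine ⟨half_smul_add_half_smul_le_one (rankOne_self_le_one hψ) (rankOne_self_le_one hφ),
    hjordan, ?_⟩
  rw [hjordan, ContinuousLinearMap.nonneg_iff_isPositive]
  intro hpos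
  refine not_isPositive_rankOne_add_rankOne hψ hφ hr hr₁ ?_
  have hc : (0 : ℂ) ≤ ((8 / r : ℝ) : ℂ) := Complex.zero_le_real.2 (by positivity)
  simpa [smul_smul, hr₀.ne'] using hpos.smul_of_nonneg hc
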